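/- If every state s_i in a word w = s_1⋯s_n of Hanoi automaton states fixes the letter x (i.e., s_i(x) = x), then for every word v, the section w|_v equals w|_u, where u is obtained from v by deleting every occurrence of the letter x. -/

import Mathlib

/-- States of the Hanoi automaton: the identity state `e` and a state `a i j`
for each transposition `(i j)`. -/
inductive HState where
  | e : HState
  | a : ℕ → ℕ → HState
deriving DecidableEq

/-- Output function: `a i j` swaps the letters `i` and `j`. -/
def HState.out : HState → ℕ → ℕ
  | .e, x => x
  | .a i j, x => if x = i then j else if x = j then i else x

/-- Transition (section) function: `a i j` goes to `e` on letters `i`, `j`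
and stays put otherwise. -/
def HState.sec : HState → ℕ → HState
  | .e, _ => .e
  | .a i j, x => if x = i ∨ x = j then .e else .a i j

/-- Action of a word of states on a letter: `(s₁⋯sₙ)(x) = s₁(s₂(⋯sₙ(x)))`. -/
def wordOut : List HState → ℕ → ℕ
  | [], x => x
  | s :: w, x => s.out (wordOut w x)

/-- Section of a word of states at a letter: `s'ᵢ = sᵢ|_{(sᵢ₊₁⋯sₙ)(x)}`. -/
def wordSec : List HState → ℕ → List HState
  | [], _ => []
  | s :: w, x => s.sec (wordOut w x) :: wordSec w x

/-- Action of a word of states on a word of letters. -/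
def wordAct : List HState → List ℕ → List ℕ
  | _, [] => []
  | w, x :: v => wordOut w x :: wordAct (wordSec w x) v

/-- Section of a word of states at a word of letters. -/
def wordSecW : List HState → List ℕ → List HState
  | w, [] => w
  | w, x :: v => wordSecW (wordSec w x) v

/-- A state of the Hanoi automaton `H_m`: either `e` or `a i j` with
`1 ≤ i < j ≤ m` (one state per transposition of `{1,…,m}`). -/
def IsHanoiState (m : ℕ) (s : HState) : Prop :=
  s = HState.e ∨ ∃ i j, s = HState.a i j ∧ 1 ≤ i ∧ i < j ∧ j ≤ m

theorem HState.sec_eq_self_of_out_eq {m x : ℕ} {s : HState} (hs : IsHanoiState m s)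
    (h : s.out x = x) : s.sec x = s := by
  rcases hs with rfl | ⟨i, j, rfl, -, hij, -⟩
  · rfl
  · simp only [HState.out] at h
    simp only [HState.sec]
    split_ifs at h ⊢ <;> first | rfl | omega

theorem IsHanoiState.sec {m : ℕ} {s : HState} (hs : IsHanoiState m s) (y : ℕ) :
    IsHanoiState m (s.sec y) := by
  rcases hs with rfl | ⟨i, j, rfl, hij⟩
  · exact Or.inl rfl
  · simp only [HState.sec]
    split_ifs
    · exact Or.inl rfl
    · exact Or.inr ⟨i, j, rfl, hij⟩

theorem HState.out_sec_of_out_eq {x : ℕ} {s : HState} (h : s.out x = x) (y : ℕ) :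
    (s.sec y).out x = x := by
  cases s with
  | e => rfl
  | a i j =>
    simp only [HState.sec]
    split_ifs
    · rfl
    · exact h

theorem wordOut_eq_self {x : ℕ} {w : List HState} (hfix : ∀ s ∈ w, s.out x = x) :
    wordOut w x = x := by
  induction w with
  | nil => rfl
  | cons s w ih =>
    rw [List.forall_mem_cons] at hfix
    rw [wordOut, ih hfix.2, hfix.1]

theorem forall_mem_wordSec {P : HState → Prop} (hP : ∀ s y, P s → P (s.sec y))
    {w : List HState} (hw : ∀ s ∈ w, P s) (y : ℕ) : ∀ s ∈ wordSec w y, P s := by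
  induction w with
  | nil => simp [wordSec]
  | cons s w ih =>
    rw [List.forall_mem_cons] at hw
    rw [wordSec, List.forall_mem_cons]
    exact ⟨hP s _ hw.1, ih hw.2⟩

theorem wordSec_eq_self {m x : ℕ} {w : List HState} (hw : ∀ s ∈ w, IsHanoiState m s)
    (hfix : ∀ s ∈ w, s.out x = x) : wordSec w x = w := by
  induction w with
  | nil => rfl
  | cons s w ih =>
    rw [List.forall_mem_cons] at hw hfix
    rw [wordSec, wordOut_eq_self hfix.2, HState.sec_eq_self_of_out_eq hw.1 hfix.1,
      ih hw.2 hfix.2]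

theorem section_delete_fixed_letter_general (m : ℕ)
    (x : ℕ)
    (w : List HState) (hw : ∀ s ∈ w, IsHanoiState m s)
    (hfix : ∀ s ∈ w, s.out x = x)
    (v : List ℕ) :
    wordSecW w v = wordSecW w (v.filter (· ≠ x)) := by
  induction v generalizing w with
  | nil => rfl
  | cons y v ih =>
    by_cases hyx : y = x
    · subst hyx
      rw [List.filter_cons_of_neg (by simp), wordSecW, wordSec_eq_self hw hfix]
      exact ih w hw hfix
    · rw [List.filter_cons_of_pos (by simpa using hyx), wordSecW, wordSecW]
      exact ih _ (forall_mem_wordSec (fun _ _ hs => hs.sec _) hw y)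
        (forall_mem_wordSec (fun _ _ hs => HState.out_sec_of_out_eq hs _) hfix y)

/-- If every state of `w` fixes the letter `x`, then sections of `w` at `v` and at
`v` with all occurrences of `x` deleted coincide. -/
theorem section_delete_fixed_letter (m : ℕ) (hm : 3 ≤ m)
    (x : ℕ) (hx : x ∈ Finset.Icc 1 m)
    (w : List HState) (hw : ∀ s ∈ w, IsHanoiState m s)
    (hfix : ∀ s ∈ w, s.out x = x)
    (v : List ℕ) (hv : ∀ y ∈ v, y ∈ Finset.Icc 1 m) :
    wordSecW w v = wordSecW w (v.filter (· ≠ x)) :=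
  section_delete_fixed_letter_general m x w hw hfix v
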